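/- Define J(X,X̄) = inf_{f,g ∈ G} (‖X•f - X̄‖_B + ‖X - X̄•g‖_B) and d(X,X̄) = inf Σ_{n=1}^N J(X_{n-1},X_n) over all finite chains X₀ = X, X_N = X̄ in F₀. Then for all X, X̄ ∈ F₀: ‖y - ȳ‖_∞ + ‖U - Ū‖_∞ + ‖H - H̄‖_∞ ≤ 2 d(X,X̄). -/

import Mathlib

open MeasureTheory ENNReal

abbrev LagState := (ℝ → ℝ) × (ℝ → ℝ) × (ℝ → ℝ) × (ℝ → ℝ)

/-- The relabeling group as a set of homeomorphisms of `ℝ`. -/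
def Gset : Set (ℝ ≃ₜ ℝ) :=
  {f | (∃ C, LipschitzWith C (fun x => f x - x)) ∧
       BddAbove (Set.range fun x => |f x - x|) ∧
       (∃ C, LipschitzWith C (fun x => f.symm x - x)) ∧
       BddAbove (Set.range fun x => |f.symm x - x|) ∧
       MemLp (fun x => deriv (⇑f) x - 1) 2 volume}

/-- The relabeling action `X • f = (y∘f, U∘f, H∘f, (r∘f)·f')`. -/
noncomputable def relabel (X : LagState) (f : ℝ ≃ₜ ℝ) : LagState :=
  (X.1 ∘ ⇑f, X.2.1 ∘ ⇑f, X.2.2.1 ∘ ⇑f, fun ξ => X.2.2.2 (f ξ) * deriv (⇑f) ξ)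

/-- The `B`-norm of the componentwise difference of two Lagrangian states:
sup norms of `y - ȳ`, `U - Ū`, `H - H̄`, plus `L²` norms of their
derivatives and of `r - r̄`. -/
noncomputable def distB (X Y : LagState) : ℝ≥0∞ :=
  (⨆ ξ, (‖X.1 ξ - Y.1 ξ‖₊ : ℝ≥0∞)) + (⨆ ξ, (‖X.2.1 ξ - Y.2.1 ξ‖₊ : ℝ≥0∞))
    + (⨆ ξ, (‖X.2.2.1 ξ - Y.2.2.1 ξ‖₊ : ℝ≥0∞))
    + eLpNorm (deriv fun ξ => X.1 ξ - Y.1 ξ) 2 volume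
    + eLpNorm (deriv fun ξ => X.2.1 ξ - Y.2.1 ξ) 2 volume
    + eLpNorm (deriv fun ξ => X.2.2.1 ξ - Y.2.2.1 ξ) 2 volume
    + eLpNorm (fun ξ => X.2.2.2 ξ - Y.2.2.2 ξ) 2 volume

/-- The relabeling functional `J`. -/
noncomputable def Jfun (X Y : LagState) : ℝ≥0∞ :=
  ⨅ f ∈ Gset, ⨅ g ∈ Gset, (distB (relabel X f) Y + distB X (relabel Y g))

/-- The set `F₀` of Lagrangian coordinates with `y + H = id`. -/
def F0set : Set LagState :=
  {X | Monotone X.1 ∧ Monotone X.2.2.1 ∧ (∀ ξ, X.1 ξ + X.2.2.1 ξ = ξ) ∧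
       LipschitzWith 1 X.1 ∧ LipschitzWith 1 X.2.2.1 ∧
       (∃ L, LipschitzWith L X.2.1) ∧
       BddAbove (Set.range fun ξ => |X.2.1 ξ|) ∧
       MemLp X.2.2.2 2 volume ∧ MemLp X.2.2.2 ⊤ volume ∧
       (∀ᵐ ξ, deriv X.1 ξ * deriv X.2.2.1 ξ
          = (deriv X.2.1 ξ) ^ 2 + (X.2.2.2 ξ) ^ 2)}

/-- The metric `d` on `F₀`, defined by minimizing sums of `J` over finite chains. -/
noncomputable def dF0 (X Y : LagState) : ℝ≥0∞ :=
  sInf {s | ∃ (N : ℕ) (c : ℕ → LagState), c 0 = X ∧ c N = Y ∧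
    (∀ n ≤ N, c n ∈ F0set) ∧ s = ∑ n ∈ Finset.range N, Jfun (c n) (c (n + 1))}


/-! The sum `S` of the three sup distances is a pseudometric dominated by the `B`-norm. On `F₀`,
`y + H = id` bounds the displacement `|g ξ - ξ|` of a relabeling by the `y`- and `H`-distances,
and `y`, `U`, `H` are 1-Lipschitz, so `S(X, X̄) ≤ 4 S(X, X̄ • g)` and symmetrically
`S(X, X̄) ≤ 4 S(X • f, X̄)`. Averaging the two gives `S ≤ 2 J`, and the triangle inequality along
a chain gives `S ≤ 2 d`. -/

open Set NNReal

theorem LipschitzWith.of_ae_norm_deriv_le {f : ℝ → ℝ} {K C : ℝ≥0} (hf : LipschitzWith K f)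
    (hC : ∀ᵐ x, ‖deriv f x‖ ≤ C) : LipschitzWith C f := by
  refine LipschitzWith.of_dist_le_mul fun b a => ?_
  have hac := (hf.lipschitzOnWith (s := uIcc a b)).absolutelyContinuousOnInterval
  rw [Real.dist_eq, Real.dist_eq, ← hac.integral_deriv_eq_sub, ← Real.norm_eq_abs]
  exact intervalIntegral.norm_integral_le_of_norm_le_const_ae (hC.mono fun x hx _ => hx)

/-- From `U'² ≤ U'² + r² = y' H'` a.e., with `|y'|, |H'| ≤ 1`. -/
theorem lipschitzWith_one_U_of_mem_F0set {X : LagState} (hX : X ∈ F0set) :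
    LipschitzWith 1 X.2.1 := by
  obtain ⟨-, -, -, hy, hH, ⟨L, hU⟩, -, -, -, henergy⟩ := hX
  refine hU.of_ae_norm_deriv_le ?_
  filter_upwards [henergy] with ξ hξ
  have hy' : |deriv X.1 ξ| ≤ 1 := by simpa using norm_deriv_le_of_lipschitz hy (x₀ := ξ)
  have hH' : |deriv X.2.2.1 ξ| ≤ 1 := by simpa using norm_deriv_le_of_lipschitz hH (x₀ := ξ)
  have hprod : deriv X.1 ξ * deriv X.2.2.1 ξ ≤ 1 := by
    calc deriv X.1 ξ * deriv X.2.2.1 ξ ≤ |deriv X.1 ξ| * |deriv X.2.2.1 ξ| := by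
          rw [← abs_mul]; exact le_abs_self _
      _ ≤ 1 := mul_le_one₀ hy' (abs_nonneg _) hH'
  rw [Real.norm_eq_abs, NNReal.coe_one, abs_le_one_iff_mul_self_le_one]
  nlinarith [sq_nonneg (X.2.2.2 ξ)]

noncomputable def supDist (u v : ℝ → ℝ) : ℝ≥0∞ :=
  ⨆ ξ, (‖u ξ - v ξ‖₊ : ℝ≥0∞)

theorem edist_le_supDist (u v : ℝ → ℝ) (ξ : ℝ) : edist (u ξ) (v ξ) ≤ supDist u v := by
  rw [edist_eq_enorm_sub, enorm_eq_nnnorm]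
  exact le_iSup (fun ξ => (‖u ξ - v ξ‖₊ : ℝ≥0∞)) ξ

theorem supDist_le_iff {u v : ℝ → ℝ} {D : ℝ≥0∞} : supDist u v ≤ D ↔ ∀ ξ, edist (u ξ) (v ξ) ≤ D := by
  simp only [supDist, iSup_le_iff, edist_eq_enorm_sub, enorm_eq_nnnorm]

theorem supDist_comm (u v : ℝ → ℝ) : supDist u v = supDist v u := by
  simp only [supDist, ← enorm_eq_nnnorm, enorm_sub_rev]

theorem supDist_triangle (u v w : ℝ → ℝ) : supDist u w ≤ supDist u v + supDist v w :=
  supDist_le_iff.2 fun ξ =>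
    (edist_triangle _ (v ξ) _).trans (add_le_add (edist_le_supDist u v ξ) (edist_le_supDist v w ξ))

theorem edist_apply_le_supDist_add_supDist {y H y' H' : ℝ → ℝ} (hyH : ∀ ξ, y ξ + H ξ = ξ)
    (hyH' : ∀ ξ, y' ξ + H' ξ = ξ) (φ : ℝ → ℝ) (ξ : ℝ) :
    edist (φ ξ) ξ ≤ supDist y (y' ∘ φ) + supDist H (H' ∘ φ) := by
  calc edist (φ ξ) ξ = edist (y ξ + H ξ) (y' (φ ξ) + H' (φ ξ)) := by
        rw [hyH, hyH', edist_comm]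
    _ ≤ edist (y ξ) (y' (φ ξ)) + edist (H ξ) (H' (φ ξ)) := edist_add_add_le _ _ _ _
    _ ≤ supDist y (y' ∘ φ) + supDist H (H' ∘ φ) :=
        add_le_add (edist_le_supDist y (y' ∘ φ) ξ) (edist_le_supDist H (H' ∘ φ) ξ)

theorem supDist_le_supDist_comp_add {u v : ℝ → ℝ} {D : ℝ≥0∞}
    (hv : LipschitzWith 1 v) (φ : ℝ → ℝ) (hφ : ∀ ξ, edist (φ ξ) ξ ≤ D) :
    supDist u v ≤ supDist u (v ∘ φ) + D :=
  supDist_le_iff.2 fun ξ =>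
    calc edist (u ξ) (v ξ) ≤ edist (u ξ) (v (φ ξ)) + edist (v (φ ξ)) (v ξ) := edist_triangle _ _ _
      _ ≤ supDist u (v ∘ φ) + D := by
          gcongr
          · exact edist_le_supDist u (v ∘ φ) ξ
          · simpa using (hv.edist_le_mul (φ ξ) ξ).trans (by simpa using hφ ξ)

noncomputable def supNorms (X Y : LagState) : ℝ≥0∞ :=
  supDist X.1 Y.1 + supDist X.2.1 Y.2.1 + supDist X.2.2.1 Y.2.2.1

theorem supNorms_comm (X Y : LagState) : supNorms X Y = supNorms Y X := by
  simp only [supNorms, supDist_comm X.1, supDist_comm X.2.1, supDist_comm X.2.2.1]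

theorem supNorms_triangle (X Y Z : LagState) : supNorms X Z ≤ supNorms X Y + supNorms Y Z :=
  calc supNorms X Z
      ≤ (supDist X.1 Y.1 + supDist Y.1 Z.1) + (supDist X.2.1 Y.2.1 + supDist Y.2.1 Z.2.1)
        + (supDist X.2.2.1 Y.2.2.1 + supDist Y.2.2.1 Z.2.2.1) := by
        unfold supNorms; gcongr <;> exact supDist_triangle _ _ _
    _ = supNorms X Y + supNorms Y Z := by unfold supNorms; ring

theorem supNorms_chain_le (c : ℕ → LagState) (N : ℕ) :
    supNorms (c 0) (c N) ≤ ∑ n ∈ Finset.range N, supNorms (c n) (c (n + 1)) := by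
  induction N with
  | zero => simp [supNorms, supDist]
  | succ N ih =>
    rw [Finset.sum_range_succ]
    exact (supNorms_triangle _ (c N) _).trans (add_le_add_left ih _)

theorem supNorms_le_distB (X Y : LagState) : supNorms X Y ≤ distB X Y := by
  unfold distB
  iterate 4 refine le_add_right ?_
  exact le_rfl

theorem supNorms_le_four_mul_supNorms_relabel {X Y : LagState}
    (hXid : ∀ ξ, X.1 ξ + X.2.2.1 ξ = ξ) (hYid : ∀ ξ, Y.1 ξ + Y.2.2.1 ξ = ξ)
    (hy : LipschitzWith 1 Y.1) (hU : LipschitzWith 1 Y.2.1) (hH : LipschitzWith 1 Y.2.2.1)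
    (g : ℝ ≃ₜ ℝ) : supNorms X Y ≤ 4 * supNorms X (relabel Y g) := by
  set a := supDist X.1 (Y.1 ∘ g)
  set b := supDist X.2.1 (Y.2.1 ∘ g)
  set c := supDist X.2.2.1 (Y.2.2.1 ∘ g)
  have hg := edist_apply_le_supDist_add_supDist hXid hYid g
  calc supNorms X Y ≤ (a + (a + c)) + (b + (a + c)) + (c + (a + c)) := by
        unfold supNorms
        gcongr
        exacts [supDist_le_supDist_comp_add hy g hg, supDist_le_supDist_comp_add hU g hg,
          supDist_le_supDist_comp_add hH g hg]
    _ = 4 * a + b + 4 * c := by ring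
    _ ≤ 4 * a + 4 * b + 4 * c := by gcongr; exact le_mul_of_one_le_left' (by norm_num)
    _ = 4 * supNorms X (relabel Y g) := by unfold supNorms relabel; ring

theorem supNorms_le_four_mul_supNorms_relabel_of_mem_F0set {X Y : LagState} (hX : X ∈ F0set)
    (hY : Y ∈ F0set) (g : ℝ ≃ₜ ℝ) : supNorms X Y ≤ 4 * supNorms X (relabel Y g) :=
  supNorms_le_four_mul_supNorms_relabel hX.2.2.1 hY.2.2.1 hY.2.2.2.1
    (lipschitzWith_one_U_of_mem_F0set hY) hY.2.2.2.2.1 g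

theorem ENNReal.le_two_mul_add_of_le_four_mul {s a b : ℝ≥0∞} (ha : s ≤ 4 * a) (hb : s ≤ 4 * b) :
    s ≤ 2 * (a + b) := by
  refine (ENNReal.mul_le_mul_iff_right two_ne_zero ofNat_ne_top).1 ?_
  calc 2 * s = s + s := two_mul s
    _ ≤ 4 * a + 4 * b := add_le_add ha hb
    _ = 2 * (2 * (a + b)) := by ring

theorem supNorms_le_two_mul_Jfun {X Y : LagState} (hX : X ∈ F0set) (hY : Y ∈ F0set) :
    supNorms X Y ≤ 2 * Jfun X Y := by
  simp only [Jfun, ENNReal.mul_iInf_of_ne two_ne_zero ofNat_ne_top, le_iInf_iff]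
  intro f _ g _
  refine ENNReal.le_two_mul_add_of_le_four_mul ?_ ?_
  · calc supNorms X Y = supNorms Y X := supNorms_comm X Y
      _ ≤ 4 * supNorms Y (relabel X f) := supNorms_le_four_mul_supNorms_relabel_of_mem_F0set hY hX f
      _ ≤ 4 * distB (relabel X f) Y := by rw [supNorms_comm]; gcongr; exact supNorms_le_distB _ _
  · calc supNorms X Y ≤ 4 * supNorms X (relabel Y g) :=
          supNorms_le_four_mul_supNorms_relabel_of_mem_F0set hX hY g
      _ ≤ 4 * distB X (relabel Y g) := by gcongr; exact supNorms_le_distB _ _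

theorem supNorms_le_two_dF0_general (X Y : LagState) :
    (⨆ ξ, (‖X.1 ξ - Y.1 ξ‖₊ : ℝ≥0∞)) + (⨆ ξ, (‖X.2.1 ξ - Y.2.1 ξ‖₊ : ℝ≥0∞))
        + (⨆ ξ, (‖X.2.2.1 ξ - Y.2.2.1 ξ‖₊ : ℝ≥0∞))
      ≤ 2 * dF0 X Y := by
  change supNorms X Y ≤ 2 * dF0 X Y
  simp only [dF0, sInf_eq_iInf, ENNReal.mul_iInf_of_ne two_ne_zero ofNat_ne_top, le_iInf_iff]
  rintro _ ⟨N, c, rfl, rfl, hc, rfl⟩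
  calc supNorms (c 0) (c N) ≤ ∑ n ∈ Finset.range N, supNorms (c n) (c (n + 1)) :=
        supNorms_chain_le c N
    _ ≤ ∑ n ∈ Finset.range N, 2 * Jfun (c n) (c (n + 1)) :=
        Finset.sum_le_sum fun n hn => supNorms_le_two_mul_Jfun (hc n (Finset.mem_range.1 hn).le)
          (hc (n + 1) (Finset.mem_range.1 hn))
    _ = 2 * ∑ n ∈ Finset.range N, Jfun (c n) (c (n + 1)) := (Finset.mul_sum _ _ _).symm

/-- Lower bound: `‖y - ȳ‖_∞ + ‖U - Ū‖_∞ + ‖H - H̄‖_∞ ≤ 2 d(X, X̄)` on `F₀`. -/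
theorem supNorms_le_two_dF0 (X Y : LagState) (hX : X ∈ F0set) (hY : Y ∈ F0set) :
    (⨆ ξ, (‖X.1 ξ - Y.1 ξ‖₊ : ℝ≥0∞)) + (⨆ ξ, (‖X.2.1 ξ - Y.2.1 ξ‖₊ : ℝ≥0∞))
        + (⨆ ξ, (‖X.2.2.1 ξ - Y.2.2.1 ξ‖₊ : ℝ≥0∞))
      ≤ 2 * dF0 X Y :=
  supNorms_le_two_dF0_general X Y
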